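/- Let M be a complex vector space (not assumed graded) with a linear map Y_M(·,x) satisfying the truncation condition, and suppose weak commutativity holds for Y_M for all pairs u, v ∈ V with exponents k(u,v) ∈ ℕ. Then for all u, v, w ∈ V and φ ∈ M there exists a (nonunique) element F(u,v,w,φ;x_0,x_4,x_5,x_1,x_2,x_3) of M((x_0,x_4,x_5,x_1^{1/p},x_2^{1/p},x_3^{1/p})) such that x_0^{k(u,v)} F ∈ M[[x_0]]((x_4,x_5,x_1^{1/p},x_2^{1/p},x_3^{1/p})), x_4^{k(u,w)} F ∈ M[[x_4]]((x_0,x_5,x_1^{1/p},x_2^{1/p},x_3^{1/p})), x_5^{k(v,w)} F ∈ M[[x_5]]((x_0,x_4,x_1^{1/p},x_2^{1/p},x_3^{1/p})), and Y_M(u,x_1)Y_M(v,x_2)Y_M(w,x_3)φ = F(u,v,w,φ;x_1−x_2,x_1−x_3,x_2−x_3,x_1,x_2,x_3), all substitutions taken with the binomial expansion convention. -/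

import Mathlib

noncomputable section

open scoped BigOperators

/-- Generalized binomial coefficient `z(z-1)⋯(z-k+1)/k!`. -/
def cbinom (z : ℂ) (k : ℕ) : ℂ :=
  (∏ j ∈ Finset.range k, (z - (j : ℂ))) / (k.factorial : ℂ)

/-- Generalized binomial coefficient with integer lower index (zero for negative index). -/
def cbinomZ (z : ℂ) (k : ℤ) : ℂ := if 0 ≤ k then cbinom z k.toNat else 0

/-- A vertex operator algebra `(V, Y, 𝟙, ω)` over `ℂ`, described in terms of the modes
`vₙ = Y v n` of the vertex operators `Y(v,x) = ∑ₙ vₙ x^{-n-1}`.  The Jacobi identity is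
expressed in its equivalent component (Borcherds identity) form: it is the equality of the
coefficients of `x₀^{-n-1} x₁^{-a-1} x₂^{-b-1}` on the two sides of the formal-variable
Jacobi identity, with all binomials expanded by the binomial expansion convention. -/
structure VOA (V : Type) [AddCommGroup V] [Module ℂ V] where
  Y : V →ₗ[ℂ] ℤ → Module.End ℂ V
  vac : V
  conf : V
  cc : ℂ
  grade : ℤ → Submodule ℂ V
  internal : DirectSum.IsInternal grade
  findim : ∀ n : ℤ, FiniteDimensional ℂ (grade n)
  bddBelow : ∃ N : ℤ, ∀ n < N, grade n = ⊥
  trunc : ∀ u v : V, ∃ N : ℤ, ∀ n ≥ N, Y u n v = 0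
  vacuum : ∀ n : ℤ, Y vac n = if n = -1 then 1 else 0
  creation_zero : ∀ (v : V) (n : ℤ), 0 ≤ n → Y v n vac = 0
  creation_id : ∀ v : V, Y v (-1) vac = v
  virasoro : ∀ m n : ℤ,
    Y conf (m + 1) * Y conf (n + 1) - Y conf (n + 1) * Y conf (m + 1)
      = ((m - n : ℤ) : ℂ) • Y conf (m + n + 1)
        + (if m + n = 0 then ((m ^ 3 - m : ℤ) : ℂ) / 12 * cc else 0) •
            (1 : Module.End ℂ V)
  L0_grade : ∀ n : ℤ, ∀ v ∈ grade n, Y conf 1 v = (n : ℂ) • v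
  L_neg_one : ∀ (u : V) (n : ℤ), Y (Y conf 0 u) n = (-n : ℂ) • Y u (n - 1)
  jacobi : ∀ (u v w : V) (a n b : ℤ),
    (∑ᶠ i : ℕ, cbinom (a : ℂ) i • Y (Y u (n + i) v) (a + b - i) w)
      = (∑ᶠ i : ℕ, ((-1 : ℂ) ^ i * cbinom (n : ℂ) i) • Y u (a + n - i) (Y v (b + i) w))
        - (-1 : ℂ) ^ n •
            (∑ᶠ i : ℕ, ((-1 : ℂ) ^ i * cbinom (n : ℂ) i) • Y v (b + n - i) (Y u (a + i) w))

variable {V W : Type} [AddCommGroup V] [Module ℂ V] [AddCommGroup W] [Module ℂ W]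

/-- Truncation condition for a module-type vertex operator map. -/
def TruncW (YW : V →ₗ[ℂ] ℤ → Module.End ℂ W) : Prop :=
  ∀ (v : V) (w : W), ∃ N : ℤ, ∀ n ≥ N, YW v n w = 0

/-- The Jacobi identity for a module map `Y_W`, in component form. -/
def JacobiW (𝒜 : VOA V) (YW : V →ₗ[ℂ] ℤ → Module.End ℂ W) : Prop :=
  ∀ (u v : V) (w : W) (a n b : ℤ),
    (∑ᶠ i : ℕ, cbinom (a : ℂ) i • YW (𝒜.Y u (n + i) v) (a + b - i) w)
      = (∑ᶠ i : ℕ, ((-1 : ℂ) ^ i * cbinom (n : ℂ) i) • YW u (a + n - i) (YW v (b + i) w))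
        - (-1 : ℂ) ^ n •
            (∑ᶠ i : ℕ, ((-1 : ℂ) ^ i * cbinom (n : ℂ) i) • YW v (b + n - i) (YW u (a + i) w))

section Twisted

variable {V M : Type} [AddCommGroup V] [Module ℂ V] [AddCommGroup M] [Module ℂ M]

/-- Truncation condition for a twisted-module-type vertex operator map.  Here, for a fixed
period `p`, the map `Y_M` is encoded by its modes in `(1/p)ℤ`, rescaled by `p`:
`YM v N` is the mode `v^ν_{N/p}`, the coefficient of `x^{-N/p-1}` in `Y_M(v,x)`. -/
def TwTrunc (YM : V →ₗ[ℂ] ℤ → Module.End ℂ M) : Prop :=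
  ∀ (v : V) (w : M), ∃ N : ℤ, ∀ n ≥ N, YM v n w = 0

/-- The twisted Jacobi identity in component form: the equality of the coefficients of
`x₀^{-n-1} x₁^{-a/p-1} x₂^{-b/p-1}` on the two sides of the twisted Jacobi identity,
with all binomials expanded by the binomial expansion convention. -/
def TwJacobi (p : ℕ) (𝒜 : VOA V) (ν : V ≃ₗ[ℂ] V) (ωp : ℂ)
    (YM : V →ₗ[ℂ] ℤ → Module.End ℂ M) : Prop :=
  ∀ (u v : V) (w : M) (n a b : ℤ),
    (∑ᶠ i : ℕ, ((-1 : ℂ) ^ i * cbinom (n : ℂ) i) •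
        YM u (a + (p : ℤ) * (n - i)) (YM v (b + (p : ℤ) * i) w))
      - (-1 : ℂ) ^ n •
          (∑ᶠ i : ℕ, ((-1 : ℂ) ^ i * cbinom (n : ℂ) i) •
            YM v (b + (p : ℤ) * (n - i)) (YM u (a + (p : ℤ) * i) w))
      = (p : ℂ)⁻¹ • ∑ r ∈ Finset.range p, ωp ^ (-(r : ℤ) * a) •
          (∑ᶠ i : ℕ, cbinom ((a : ℂ) / (p : ℂ)) i •
            YM (𝒜.Y ((ν ^ r) u) (n + i) v) (a + b - (p : ℤ) * i) w)

/-- Weak commutativity for twisted vertex operators with exponent `k`: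
`(x₁-x₂)^k Y_M(u,x₁)Y_M(v,x₂) = (x₁-x₂)^k Y_M(v,x₂)Y_M(u,x₁)`, as the equality of the
coefficients of `x₁^{a/p} x₂^{b/p}` (endomorphism-valued). -/
def TwWC (p : ℕ) (YM : V →ₗ[ℂ] ℤ → Module.End ℂ M) (k : ℕ) (u v : V) : Prop :=
  ∀ a b : ℤ,
    (∑ᶠ i : ℕ, ((-1 : ℂ) ^ i * cbinom (k : ℂ) i) •
        (YM u ((p : ℤ) * ((k : ℤ) - i) - a - p) * YM v ((p : ℤ) * i - b - p)))
      = ∑ᶠ i : ℕ, ((-1 : ℂ) ^ i * cbinom (k : ℂ) i) •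
          (YM v ((p : ℤ) * i - b - p) * YM u ((p : ℤ) * ((k : ℤ) - i) - a - p))

/-- Modified weak associativity for twisted vertex operators with exponent `k`:
`lim_{x₁^{1/p} → ωₚ^s (x₂+x₀)^{1/p}} ((x₁-x₂)^k Y_M(u,x₁)Y_M(v,x₂))
   = x₀^k Y_M(Y(ν^{-s}u,x₀)v,x₂)` for all `s ∈ ℤ`, stated as the equality of the
coefficients of `x₀^n x₂^{C/p}` applied to an arbitrary vector `w`.  In the formal limit,
each integral power of `x₁^{1/p}` is replaced by the corresponding binomially expanded
power of `ωₚ^s (x₂+x₀)^{1/p}`. -/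
def TwMWA (p : ℕ) (𝒜 : VOA V) (ν : V ≃ₗ[ℂ] V) (ωp : ℂ)
    (YM : V →ₗ[ℂ] ℤ → Module.End ℂ M) (k : ℕ) (u v : V) : Prop :=
  ∀ (s n C : ℤ) (w : M),
    (∑ᶠ a : ℤ, (ωp ^ (s * a) * cbinomZ ((a : ℂ) / (p : ℂ)) n) •
        (∑ᶠ i : ℕ, ((-1 : ℂ) ^ i * cbinom (k : ℂ) i) •
          YM u ((p : ℤ) * ((k : ℤ) - i) - a - p)
            (YM v ((p : ℤ) * i - (C - a + (p : ℤ) * n) - p) w)))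
      = YM (𝒜.Y ((ν ^ (-s)) u) ((k : ℤ) - n - 1) v) (-C - p) w

end Twisted

section S10

variable {V M : Type} [AddCommGroup V] [Module ℂ V] [AddCommGroup M] [Module ℂ M]

/-- `F ∈ M((x₀,x₄,x₅,x₁^{1/p},x₂^{1/p},x₃^{1/p}))`: `F n₀ n₄ n₅ N₁ N₂ N₃` is the
coefficient of `x₀^{n₀} x₄^{n₄} x₅^{n₅} x₁^{N₁/p} x₂^{N₂/p} x₃^{N₃/p}`, and there are
only finitely many negative powers of each variable, with a common bound. -/
def TwIsLaurent6 (F : ℤ → ℤ → ℤ → ℤ → ℤ → ℤ → M) : Prop :=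
  ∃ N : ℕ, ∀ n0 n4 n5 N1 N2 N3 : ℤ,
    (n0 < -(N : ℤ) ∨ n4 < -(N : ℤ) ∨ n5 < -(N : ℤ) ∨
     N1 < -(N : ℤ) ∨ N2 < -(N : ℤ) ∨ N3 < -(N : ℤ)) → F n0 n4 n5 N1 N2 N3 = 0


/-!
Let `G := (x₁-x₂)^{k(u,v)} (x₁-x₃)^{k(u,w)} (x₂-x₃)^{k(v,w)} Y_M(u,x₁)Y_M(v,x₂)Y_M(w,x₃)φ`.
Weak commutativity lets each of the three operators be moved next to `φ` inside `G`, so by the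
truncation condition `G` has only finitely many negative powers of each `xᵢ^{1/p}`, and
`F := x₀^{-k(u,v)} x₄^{-k(u,w)} x₅^{-k(v,w)} G` has the required pole orders.
Substituting `x₀ = x₁-x₂`, `x₄ = x₁-x₃`, `x₅ = x₂-x₃` multiplies `G` by the binomial expansions
of `(x₁-x₂)^{-k(u,v)}`, `(x₁-x₃)^{-k(u,w)}`, `(x₂-x₃)^{-k(v,w)}`, which invert the polynomial
factors by Chu–Vandermonde; the truncation of the triple product makes all the sums involved
finite, so they may be rearranged.
-/

open Finset

/-- The coefficient of `x^{a-i} y^i` in the expansion of `(x - y)^a` in nonnegative powers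
of `y`. -/
def diffPowCoeff (a : ℂ) (i : ℕ) : ℂ := (-1) ^ i * cbinom a i

theorem cbinom_eq_choose (z : ℂ) (k : ℕ) : cbinom z k = Ring.choose z k := by
  rw [Ring.choose_eq_smul, ← Polynomial.aeval_eq_smeval, ← Polynomial.eval_map_algebraMap,
    descPochhammer_map, descPochhammer_eval_eq_prod_range, cbinom, smul_eq_mul, div_eq_inv_mul]

theorem diffPowCoeff_add (a b : ℂ) (s : ℕ) :
    diffPowCoeff (a + b) s = ∑ ij ∈ antidiagonal s, diffPowCoeff a ij.1 * diffPowCoeff b ij.2 := by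
  simp only [diffPowCoeff, cbinom_eq_choose, Ring.add_choose_eq s (Commute.all a b), mul_sum]
  refine sum_congr rfl fun ij hij => ?_
  rw [← mem_antidiagonal.1 hij, pow_add]
  ring

theorem diffPowCoeff_zero_left (s : ℕ) : diffPowCoeff 0 s = if s = 0 then 1 else 0 := by
  rw [diffPowCoeff, cbinom_eq_choose, Ring.choose_zero_ite]
  split_ifs with hs <;> simp [hs]

theorem diffPowCoeff_natCast_of_lt {n i : ℕ} (h : n < i) : diffPowCoeff n i = 0 := by
  rw [diffPowCoeff, cbinom_eq_choose, Ring.choose_natCast, Nat.choose_eq_zero_of_lt h,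
    Nat.cast_zero, mul_zero]

section Inversion

variable {X : Type*} [AddCommMonoid X] [Module ℂ X]

theorem finsum_diffPowCoeff_smul (k : ℕ) (g : ℕ → X) :
    ∑ᶠ i : ℕ, diffPowCoeff k i • g i = ∑ i ∈ range (k + 1), diffPowCoeff k i • g i := by
  refine finsum_eq_sum_of_support_subset _ <| Function.support_subset_iff'.2 fun i hi => ?_
  rw [coe_range, Set.mem_Iio, not_lt] at hi
  rw [diffPowCoeff_natCast_of_lt (by omega), zero_smul]

theorem sum_smul_sum_smul_comm {ι κ : Type*} (s : Finset ι) (t : Finset κ) (a : ι → ℂ)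
    (b : κ → ℂ) (f : ι → κ → X) :
    ∑ x ∈ s, a x • ∑ y ∈ t, b y • f x y = ∑ y ∈ t, b y • ∑ x ∈ s, a x • f x y := by
  simp only [smul_sum]
  rw [sum_comm]
  exact sum_congr rfl fun y _ => sum_congr rfl fun x _ => smul_comm _ _ _

theorem sum_diffPowCoeff_inversion (k : ℕ) {I : ℕ} {g : ℕ → X} (hg : ∀ s, I < s → g s = 0) :
    ∑ i ∈ range (I + 1), diffPowCoeff (-k) i • ∑ m ∈ range (k + 1), diffPowCoeff k m • g (i + m)
      = g 0 := by
  have htrunc : ∀ i ∈ range (I + 1), ∑ m ∈ range (k + 1), diffPowCoeff k m • g (i + m)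
      = ∑ m ∈ range (I + 1 - i), diffPowCoeff k m • g (i + m) := fun i _ =>
    (finsum_eq_sum_of_support_subset _ <| Function.support_subset_iff'.2 fun m hm => by
      rw [coe_range, Set.mem_Iio, not_lt] at hm
      rw [diffPowCoeff_natCast_of_lt (by omega), zero_smul]).symm.trans
    (finsum_eq_sum_of_support_subset _ <| Function.support_subset_iff'.2 fun m hm => by
      rw [coe_range, Set.mem_Iio, not_lt] at hm
      rw [hg _ (by omega), smul_zero])
  have hconv : ∀ s, ∑ j ∈ range (s + 1), diffPowCoeff (-k) j * diffPowCoeff k (s - j)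
      = if s = 0 then 1 else 0 := by
    intro s
    rw [← Nat.sum_antidiagonal_eq_sum_range_succ
      (fun i j => diffPowCoeff (-k) i * diffPowCoeff k j), ← diffPowCoeff_add, neg_add_cancel,
      diffPowCoeff_zero_left]
  calc _ = ∑ i ∈ range (I + 1), ∑ m ∈ range (I + 1 - i),
        (diffPowCoeff (-k) i * diffPowCoeff k m) • g (i + m) := by
        refine sum_congr rfl fun i hi => ?_
        rw [htrunc i hi, smul_sum]
        simp only [smul_smul]
    _ = ∑ s ∈ range (I + 1), ∑ j ∈ range (s + 1),
        (diffPowCoeff (-k) j * diffPowCoeff k (s - j)) • g (j + (s - j)) :=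
        (sum_range_diag_flip (I + 1) fun i m =>
          (diffPowCoeff (-k) i * diffPowCoeff k m) • g (i + m)).symm
    _ = ∑ s ∈ range (I + 1), (if s = 0 then (1 : ℂ) else 0) • g s := by
        refine sum_congr rfl fun s _ => ?_
        rw [← hconv, sum_smul]
        exact sum_congr rfl fun j hj => by
          rw [Nat.add_sub_cancel' (by simpa [Nat.lt_succ_iff] using hj)]
    _ = g 0 := by simp

theorem sum_diffPowCoeff_inversion₃ (k₀ k₄ k₅ : ℕ) {I J L : ℕ} {Q : ℕ → ℕ → ℕ → X}
    (hz : ∀ s t z, L < z → Q s t z = 0) (ht : ∀ s t, J < t → Q s t 0 = 0)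
    (hs : ∀ s, I < s → Q s 0 0 = 0) :
    ∑ i ∈ range (I + 1), diffPowCoeff (-k₀) i • ∑ j ∈ range (J + 1), diffPowCoeff (-k₄) j •
      ∑ l ∈ range (L + 1), diffPowCoeff (-k₅) l •
        ∑ r ∈ range (k₅ + 1), diffPowCoeff k₅ r • ∑ n ∈ range (k₄ + 1), diffPowCoeff k₄ n •
          ∑ m ∈ range (k₀ + 1), diffPowCoeff k₀ m • Q (i + m) (j + n) (l + r)
      = Q 0 0 0 := by
  have hl : ∀ i j, ∑ l ∈ range (L + 1), diffPowCoeff (-k₅) l •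
      ∑ r ∈ range (k₅ + 1), diffPowCoeff k₅ r • ∑ n ∈ range (k₄ + 1), diffPowCoeff k₄ n •
        ∑ m ∈ range (k₀ + 1), diffPowCoeff k₀ m • Q (i + m) (j + n) (l + r)
      = ∑ n ∈ range (k₄ + 1), diffPowCoeff k₄ n •
          ∑ m ∈ range (k₀ + 1), diffPowCoeff k₀ m • Q (i + m) (j + n) 0 :=
    fun i j => sum_diffPowCoeff_inversion k₅ (g := fun z => ∑ n ∈ range (k₄ + 1),
      diffPowCoeff k₄ n • ∑ m ∈ range (k₀ + 1), diffPowCoeff k₀ m • Q (i + m) (j + n) z)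
      fun z hzL => by simp [hz _ _ _ hzL]
  have hj : ∀ i, ∑ j ∈ range (J + 1), diffPowCoeff (-k₄) j • ∑ n ∈ range (k₄ + 1),
      diffPowCoeff k₄ n • ∑ m ∈ range (k₀ + 1), diffPowCoeff k₀ m • Q (i + m) (j + n) 0
      = ∑ m ∈ range (k₀ + 1), diffPowCoeff k₀ m • Q (i + m) 0 0 :=
    fun i => sum_diffPowCoeff_inversion k₄ (g := fun t => ∑ m ∈ range (k₀ + 1),
      diffPowCoeff k₀ m • Q (i + m) t 0) fun t htJ => by simp [ht _ _ htJ]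
  simp only [hl, hj]
  exact sum_diffPowCoeff_inversion k₀ hs

end Inversion

section Regularized

variable {p : ℕ} {YM : V →ₗ[ℂ] ℤ → Module.End ℂ M}

theorem TwWC.sum_apply {k : ℕ} {u v : V} (h : TwWC p YM k u v) (a b : ℤ) (ψ : M) :
    ∑ i ∈ range (k + 1), diffPowCoeff k i • YM u (p * (k - i) - a - p) (YM v (p * i - b - p) ψ)
      = ∑ i ∈ range (k + 1), diffPowCoeff k i •
          YM v (p * i - b - p) (YM u (p * (k - i) - a - p) ψ) := by
  have hab : ∑ᶠ i : ℕ, diffPowCoeff k i • (YM u (p * (k - i) - a - p) * YM v (p * i - b - p))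
      = ∑ᶠ i : ℕ, diffPowCoeff k i • (YM v (p * i - b - p) * YM u (p * (k - i) - a - p)) :=
    h a b
  rw [finsum_diffPowCoeff_smul, finsum_diffPowCoeff_smul] at hab
  simpa only [LinearMap.coe_sum, Finset.sum_apply, LinearMap.smul_apply, Module.End.mul_apply]
    using congrArg (fun T : Module.End ℂ M => T ψ) hab

theorem TwWC.sum_apply_eq_zero {k : ℕ} {u v : V} (h : TwWC p YM k u v) {ψ : M} {N₀ a : ℤ}
    (hu : ∀ N ≥ N₀, YM u N ψ = 0) (ha : a + p + N₀ ≤ 0) (b : ℤ) :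
    ∑ i ∈ range (k + 1), diffPowCoeff k i • YM u (p * (k - i) - a - p) (YM v (p * i - b - p) ψ)
      = 0 := by
  rw [h.sum_apply]
  refine sum_eq_zero fun i hi => ?_
  have : (i : ℤ) ≤ k := by simpa [Nat.lt_succ_iff] using hi
  rw [hu _ (by nlinarith), map_zero, smul_zero]

/-- The coefficient of `x₁^{a/p} x₂^{b/p} x₃^{c/p}` in `Y_M(u,x₁)Y_M(v,x₂)Y_M(w,x₃)φ`. -/
def tripleCoeff (p : ℕ) (YM : V →ₗ[ℂ] ℤ → Module.End ℂ M) (u v w : V) (φ : M) (a b c : ℤ) : M :=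
  YM u (-a - p) (YM v (-b - p) (YM w (-c - p) φ))

/-- The coefficient of `x₁^{a/p} x₂^{b/p} x₃^{c/p}` in
`(x₁-x₂)^{k₀} (x₁-x₃)^{k₄} (x₂-x₃)^{k₅} Y_M(u,x₁)Y_M(v,x₂)Y_M(w,x₃)φ`; the sums are nested in the
order that `sum_diffPowCoeff_inversion₃` undoes. -/
def regularizedTripleCoeff (p : ℕ) (YM : V →ₗ[ℂ] ℤ → Module.End ℂ M) (k₀ k₄ k₅ : ℕ)
    (u v w : V) (φ : M) (a b c : ℤ) : M :=
  ∑ r ∈ range (k₅ + 1), diffPowCoeff k₅ r • ∑ n ∈ range (k₄ + 1), diffPowCoeff k₄ n •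
    ∑ m ∈ range (k₀ + 1), diffPowCoeff k₀ m •
      tripleCoeff p YM u v w φ (a - p * (k₀ - m) - p * (k₄ - n)) (b - p * m - p * (k₅ - r))
        (c - p * n - p * r)

variable {k₀ k₄ k₅ : ℕ} {u v w : V} {φ : M} {N₀ : ℤ}

theorem regularizedTripleCoeff_eq_zero_of_thd_le (hw : ∀ N ≥ N₀, YM w N φ = 0) (a b : ℤ)
    {c : ℤ} (hc : c + p + N₀ ≤ 0) : regularizedTripleCoeff p YM k₀ k₄ k₅ u v w φ a b c = 0 := by
  refine sum_eq_zero fun r _ => smul_eq_zero_of_right _ <| sum_eq_zero fun n _ =>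
    smul_eq_zero_of_right _ <| sum_eq_zero fun m _ => ?_
  rw [tripleCoeff, hw _ (by nlinarith), map_zero, map_zero, smul_zero]

theorem regularizedTripleCoeff_eq_zero_of_snd_le (hvw : TwWC p YM k₅ v w)
    (hv : ∀ N ≥ N₀, YM v N φ = 0) (a : ℤ) {b : ℤ} (hb : b + p + N₀ ≤ 0) (c : ℤ) :
    regularizedTripleCoeff p YM k₀ k₄ k₅ u v w φ a b c = 0 := by
  rw [regularizedTripleCoeff, sum_smul_sum_smul_comm]
  refine sum_eq_zero fun n _ => ?_
  rw [sum_smul_sum_smul_comm]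
  refine smul_eq_zero_of_right _ <| sum_eq_zero fun m _ => smul_eq_zero_of_right _ ?_
  have hzero := hvw.sum_apply_eq_zero hv (a := b - p * m) (by nlinarith) (c - p * n)
  rw [← map_zero (YM u (-(a - p * (k₀ - m) - p * (k₄ - n)) - p)), ← hzero, map_sum]
  refine sum_congr rfl fun r _ => ?_
  rw [map_smul, tripleCoeff]
  congr! 5 <;> ring

theorem regularizedTripleCoeff_eq_zero_of_fst_le (huv : TwWC p YM k₀ u v)
    (huw : TwWC p YM k₄ u w) (hu : ∀ N ≥ N₀, YM u N φ = 0) {a : ℤ} (ha : a + p + N₀ ≤ 0)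
    (b c : ℤ) : regularizedTripleCoeff p YM k₀ k₄ k₅ u v w φ a b c = 0 := by
  refine sum_eq_zero fun r _ => smul_eq_zero_of_right _ ?_
  have hcomm : ∀ n : ℕ, ∑ m ∈ range (k₀ + 1), diffPowCoeff k₀ m •
      tripleCoeff p YM u v w φ (a - p * (k₀ - m) - p * (k₄ - n)) (b - p * m - p * (k₅ - r))
        (c - p * n - p * r)
      = ∑ m ∈ range (k₀ + 1), diffPowCoeff k₀ m •
      YM v (p * m - (b - p * (k₅ - r)) - p)
        (YM u (p * (k₀ - m) - (a - p * (k₄ - n)) - p) (YM w (-(c - p * n - p * r) - p) φ)) := by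
    intro n
    simp only [tripleCoeff]
    convert huv.sum_apply (a - p * (k₄ - n)) (b - p * (k₅ - r)) _ using 6 <;> ring
  simp only [hcomm]
  rw [sum_smul_sum_smul_comm]
  refine sum_eq_zero fun m hm => smul_eq_zero_of_right _ ?_
  have hm : (m : ℤ) ≤ k₀ := by simpa [Nat.lt_succ_iff] using hm
  have hzero := huw.sum_apply_eq_zero hu (a := a - p * (k₀ - m)) (by nlinarith) (c - p * r)
  rw [← map_zero (YM v (p * m - (b - p * (k₅ - r)) - p)), ← hzero, map_sum]
  refine sum_congr rfl fun n _ => ?_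
  rw [map_smul]
  congr! 5 <;> ring

theorem regularizedTripleCoeff_shift (A B C : ℤ) (i j l : ℕ) :
    regularizedTripleCoeff p YM k₀ k₄ k₅ u v w φ (A - p * (-(k₀ : ℤ) - i) - p * (-(k₄ : ℤ) - j))
        (B - p * i - p * (-(k₅ : ℤ) - l)) (C - p * j - p * l)
      = ∑ r ∈ range (k₅ + 1), diffPowCoeff k₅ r • ∑ n ∈ range (k₄ + 1), diffPowCoeff k₄ n •
          ∑ m ∈ range (k₀ + 1), diffPowCoeff k₀ m • tripleCoeff p YM u v w φ
            (A + p * (i + m : ℕ) + p * (j + n : ℕ)) (B - p * (i + m : ℕ) + p * (l + r : ℕ))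
            (C - p * (j + n : ℕ) - p * (l + r : ℕ)) := by
  refine sum_congr rfl fun r _ => congrArg _ <| sum_congr rfl fun n _ => congrArg _ <|
    sum_congr rfl fun m _ => congrArg _ ?_
  push_cast
  congr 1 <;> ring

theorem regularizedTripleCoeff_shift_eq_zero (hp : 0 < p) (hvw : TwWC p YM k₅ v w) {Nv Nw : ℤ}
    (hv : ∀ N ≥ Nv, YM v N φ = 0) (hw : ∀ N ≥ Nw, YM w N φ = 0) {A B C : ℤ} {I L : ℕ}
    (hL : C + p + Nw ≤ L) (hI : B + p * (k₅ + L) + p + Nv ≤ I) {i j l : ℕ}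
    (h : I < i ∨ L < j ∨ L < l) :
    regularizedTripleCoeff p YM k₀ k₄ k₅ u v w φ (A - p * (-(k₀ : ℤ) - i) - p * (-(k₄ : ℤ) - j))
      (B - p * i - p * (-(k₅ : ℤ) - l)) (C - p * j - p * l) = 0 := by
  have hpmul : ∀ t : ℕ, (t : ℤ) ≤ p * t :=
    fun t => le_mul_of_one_le_left (by positivity) (by exact_mod_cast hp)
  by_cases hjl : L < j ∨ L < l
  · have := hpmul j
    have := hpmul l
    exact regularizedTripleCoeff_eq_zero_of_thd_le hw _ _ (by omega)
  · have hlL : (p : ℤ) * l ≤ p * L := by gcongr; omega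
    have := hpmul i
    have hiI : (I : ℤ) < i := by omega
    exact regularizedTripleCoeff_eq_zero_of_snd_le hvw hv _ (by linarith) _

theorem exists_regularizedTripleCoeff_eq_zero (hT : TwTrunc YM) (huv : TwWC p YM k₀ u v)
    (huw : TwWC p YM k₄ u w) (hvw : TwWC p YM k₅ v w) (φ : M) :
    ∃ N : ℤ, ∀ a b c, (a ≤ N ∨ b ≤ N ∨ c ≤ N) →
      regularizedTripleCoeff p YM k₀ k₄ k₅ u v w φ a b c = 0 := by
  obtain ⟨Nu, hNu⟩ := hT u φ
  obtain ⟨Nv, hNv⟩ := hT v φ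
  obtain ⟨Nw, hNw⟩ := hT w φ
  refine ⟨min (min (-p - Nu) (-p - Nv)) (-p - Nw), fun a b c h => ?_⟩
  rcases h with ha | hb | hc
  · exact regularizedTripleCoeff_eq_zero_of_fst_le huv huw hNu (by omega) b c
  · exact regularizedTripleCoeff_eq_zero_of_snd_le hvw hNv a (by omega) c
  · exact regularizedTripleCoeff_eq_zero_of_thd_le hNw a b (by omega)

end Regularized

section Substitution

/-- `x₀^{e₀} x₄^{e₄} x₅^{e₅} G(x₁,x₂,x₃)`. -/
def monomialMul {X : Type*} [Zero X] (e₀ e₄ e₅ : ℤ) (G : ℤ → ℤ → ℤ → X) :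
    ℤ → ℤ → ℤ → ℤ → ℤ → ℤ → X :=
  fun n₀ n₄ n₅ N₁ N₂ N₃ => if n₀ = e₀ ∧ n₄ = e₄ ∧ n₅ = e₅ then G N₁ N₂ N₃ else 0

theorem monomialMul_eq_zero {X : Type*} [Zero X] {e₀ e₄ e₅ n₀ n₄ n₅ : ℤ}
    {G : ℤ → ℤ → ℤ → X} (h : ¬(n₀ = e₀ ∧ n₄ = e₄ ∧ n₅ = e₅)) (N₁ N₂ N₃ : ℤ) :
    monomialMul e₀ e₄ e₅ G n₀ n₄ n₅ N₁ N₂ N₃ = 0 :=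
  if_neg h

theorem twIsLaurent6_monomialMul {X : Type} [AddCommGroup X] {e₀ e₄ e₅ N : ℤ}
    {G : ℤ → ℤ → ℤ → X} (hG : ∀ a b c, (a ≤ N ∨ b ≤ N ∨ c ≤ N) → G a b c = 0) :
    TwIsLaurent6 (monomialMul e₀ e₄ e₅ G) := by
  refine ⟨(max (max (-e₀) (-e₄)) (max (-e₅) (-N))).toNat, fun n₀ n₄ n₅ N₁ N₂ N₃ h => ?_⟩
  unfold monomialMul
  split_ifs with he
  · exact hG _ _ _ (by omega)
  · rfl

variable {e₀ e₄ e₅ : ℤ} {G : ℤ → ℤ → ℤ → M}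

/-- The term indexed by `q` of the coefficient of `x₁^{A/p} x₂^{B/p} x₃^{C/p}` in
`F(x₁-x₂, x₁-x₃, x₂-x₃, x₁, x₂, x₃)`. -/
def substTerm (p : ℕ) (F : ℤ → ℤ → ℤ → ℤ → ℤ → ℤ → M) (A B C : ℤ)
    (q : (ℤ × ℤ × ℤ) × ℕ × ℕ × ℕ) : M :=
  ((-1 : ℂ) ^ (q.2.1 + q.2.2.1 + q.2.2.2) *
    cbinom (q.1.1 : ℂ) q.2.1 * cbinom (q.1.2.1 : ℂ) q.2.2.1 * cbinom (q.1.2.2 : ℂ) q.2.2.2) •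
  F q.1.1 q.1.2.1 q.1.2.2
    (A - (p : ℤ) * (q.1.1 - q.2.1) - (p : ℤ) * (q.1.2.1 - q.2.2.1))
    (B - (p : ℤ) * q.2.1 - (p : ℤ) * (q.1.2.2 - q.2.2.2))
    (C - (p : ℤ) * q.2.2.1 - (p : ℤ) * q.2.2.2)

theorem finsum_substTerm_monomialMul (p : ℕ) (A B C : ℤ) {I J L : ℕ}
    (hbox : ∀ i j l : ℕ, (I < i ∨ J < j ∨ L < l) →
      G (A - p * (e₀ - i) - p * (e₄ - j)) (B - p * i - p * (e₅ - l)) (C - p * j - p * l) = 0) :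
    ∑ᶠ q, substTerm p (monomialMul e₀ e₄ e₅ G) A B C q
      = ∑ i ∈ range (I + 1), ∑ j ∈ range (J + 1), ∑ l ∈ range (L + 1),
          (diffPowCoeff e₀ i * diffPowCoeff e₄ j * diffPowCoeff e₅ l) •
            G (A - p * (e₀ - i) - p * (e₄ - j)) (B - p * i - p * (e₅ - l))
              (C - p * j - p * l) := by
  rw [finsum_eq_sum_of_support_subset (s := {(e₀, e₄, e₅)} ×ˢ
    (range (I + 1) ×ˢ range (J + 1) ×ˢ range (L + 1)))]
  · simp only [sum_product, sum_singleton]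
    refine sum_congr rfl fun i _ => sum_congr rfl fun j _ => sum_congr rfl fun l _ => ?_
    simp only [substTerm, monomialMul, and_self, if_true, diffPowCoeff, pow_add]
    congr 1
    ring
  · rintro ⟨⟨n₀, n₄, n₅⟩, i, j, l⟩ hq
    contrapose! hq
    simp only [coe_product, coe_singleton, coe_range, Set.mem_prod, Set.mem_singleton_iff,
      Prod.mk.injEq, Set.mem_Iio, not_and_or, not_lt] at hq
    rw [Function.notMem_support, substTerm]
    by_cases he : n₀ = e₀ ∧ n₄ = e₄ ∧ n₅ = e₅
    · obtain ⟨rfl, rfl, rfl⟩ := he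
      simp only [monomialMul, and_self, if_true]
      rw [hbox i j l (by omega), smul_zero]
    · rw [monomialMul_eq_zero he, smul_zero]

theorem tripleCoeff_eq_finsum_substTerm {p : ℕ} (hp : 0 < p) {YM : V →ₗ[ℂ] ℤ → Module.End ℂ M}
    (hT : TwTrunc YM) (k₀ k₄ : ℕ) {k₅ : ℕ} {u v w : V} (hvw : TwWC p YM k₅ v w) (φ : M)
    (A B C : ℤ) :
    tripleCoeff p YM u v w φ A B C = ∑ᶠ q, substTerm p
      (monomialMul (-k₀) (-k₄) (-k₅) (regularizedTripleCoeff p YM k₀ k₄ k₅ u v w φ)) A B C q := by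
  obtain ⟨Nv, hNv⟩ := hT v φ
  obtain ⟨Nw, hNw⟩ := hT w φ
  obtain ⟨Nv', hNv'⟩ := hT v (YM w (-C - p) φ)
  have hpmul : ∀ t : ℕ, (t : ℤ) ≤ p * t :=
    fun t => le_mul_of_one_le_left (by positivity) (by exact_mod_cast hp)
  obtain ⟨L, hL⟩ : ∃ L : ℕ, C + p + Nw ≤ L := ⟨_, Int.self_le_toNat _⟩
  obtain ⟨I, hIv, hIv'⟩ : ∃ I : ℕ, B + p * (k₅ + L) + p + Nv ≤ I ∧ B + p + Nv' ≤ I :=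
    ⟨(max (B + p * (k₅ + L) + p + Nv) (B + p + Nv')).toNat, by omega, by omega⟩
  rw [finsum_substTerm_monomialMul p A B C fun i j l =>
    regularizedTripleCoeff_shift_eq_zero hp hvw hNv hNw hL hIv]
  set Q : ℕ → ℕ → ℕ → M := fun s t z =>
    tripleCoeff p YM u v w φ (A + p * s + p * t) (B - p * s + p * z) (C - p * t - p * z)
  have hQz : ∀ s t z, L < z → Q s t z = 0 := fun s t z hz => by
    simp only [Q, tripleCoeff]
    have := hpmul z
    have : (0 : ℤ) ≤ p * t := by positivity
    rw [hNw _ (by linarith), map_zero, map_zero]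
  have hQt : ∀ s t, L < t → Q s t 0 = 0 := fun s t ht => by
    simp only [Q, tripleCoeff]
    have := hpmul t
    rw [hNw _ (by omega), map_zero, map_zero]
  have hQs : ∀ s, I < s → Q s 0 0 = 0 := fun s hs => by
    simp only [Q, tripleCoeff, Nat.cast_zero, mul_zero, add_zero, sub_zero]
    have := hpmul s
    rw [hNv' _ (by omega), map_zero]
  calc tripleCoeff p YM u v w φ A B C = Q 0 0 0 := by simp [Q]
    _ = _ := (sum_diffPowCoeff_inversion₃ k₀ k₄ k₅ hQz hQt hQs).symm
    _ = _ := by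
      simp only [Q, regularizedTripleCoeff_shift, mul_smul, smul_sum]
      push_cast
      rfl

end Substitution

theorem statement10_general (p : ℕ) (hp : 0 < p)
    (YM : V →ₗ[ℂ] ℤ → Module.End ℂ M)
    (hT : TwTrunc YM)
    (k : V → V → ℕ) (hWC : ∀ u v : V, TwWC p YM (k u v) u v) :
    ∀ (u v w : V) (φ : M), ∃ F : ℤ → ℤ → ℤ → ℤ → ℤ → ℤ → M,
      TwIsLaurent6 F ∧
      (∀ n0 n4 n5 N1 N2 N3 : ℤ, n0 < -(k u v : ℤ) → F n0 n4 n5 N1 N2 N3 = 0) ∧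
      (∀ n0 n4 n5 N1 N2 N3 : ℤ, n4 < -(k u w : ℤ) → F n0 n4 n5 N1 N2 N3 = 0) ∧
      (∀ n0 n4 n5 N1 N2 N3 : ℤ, n5 < -(k v w : ℤ) → F n0 n4 n5 N1 N2 N3 = 0) ∧
      (∀ A B C : ℤ,
        YM u (-A - p) (YM v (-B - p) (YM w (-C - p) φ))
          = ∑ᶠ q : (ℤ × ℤ × ℤ) × ℕ × ℕ × ℕ,
              ((-1 : ℂ) ^ (q.2.1 + q.2.2.1 + q.2.2.2) *
                cbinom (q.1.1 : ℂ) q.2.1 * cbinom (q.1.2.1 : ℂ) q.2.2.1 *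
                cbinom (q.1.2.2 : ℂ) q.2.2.2) •
              F q.1.1 q.1.2.1 q.1.2.2
                (A - (p : ℤ) * (q.1.1 - q.2.1) - (p : ℤ) * (q.1.2.1 - q.2.2.1))
                (B - (p : ℤ) * q.2.1 - (p : ℤ) * (q.1.2.2 - q.2.2.2))
                (C - (p : ℤ) * q.2.2.1 - (p : ℤ) * q.2.2.2)) := by
  intro u v w φ
  obtain ⟨N, hN⟩ :=
    exists_regularizedTripleCoeff_eq_zero hT (hWC u v) (hWC u w) (hWC v w) φ
  refine ⟨monomialMul (-k u v) (-k u w) (-k v w)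
      (regularizedTripleCoeff p YM (k u v) (k u w) (k v w) u v w φ),
    twIsLaurent6_monomialMul hN, fun _ _ _ _ _ _ h => monomialMul_eq_zero (by omega) _ _ _,
    fun _ _ _ _ _ _ h => monomialMul_eq_zero (by omega) _ _ _,
    fun _ _ _ _ _ _ h => monomialMul_eq_zero (by omega) _ _ _,
    tripleCoeff_eq_finsum_substTerm hp hT _ _ (hWC v w) φ⟩

/-- Lemma 5.5.  Weak commutativity for all pairs implies the existence,
for all `u, v, w ∈ V` and `φ ∈ M`, of a six-variable series `F` with pole bounds in
`x₀, x₄, x₅` governed by `k(u,v), k(u,w), k(v,w)` and with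
`Y_M(u,x₁)Y_M(v,x₂)Y_M(w,x₃)φ = F(x₁-x₂, x₁-x₃, x₂-x₃, x₁, x₂, x₃)`,
the substitution being the equality of the coefficients of `x₁^{A/p} x₂^{B/p} x₃^{C/p}`,
with each binomial `(xᵢ-xⱼ)^{n}` expanded in nonnegative integral powers of the second
variable. -/
theorem statement10 (p : ℕ) (hp : 0 < p) (𝒜 : VOA V) (ν : V ≃ₗ[ℂ] V)
    (hν_vac : ν 𝒜.vac = 𝒜.vac) (hν_conf : ν 𝒜.conf = 𝒜.conf)
    (hν_Y : ∀ (u : V) (n : ℤ) (v : V), ν (𝒜.Y u n v) = 𝒜.Y (ν u) n (ν v))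
    (hν_per : ν ^ p = 1) (ωp : ℂ) (hωp : IsPrimitiveRoot ωp p)
    (YM : V →ₗ[ℂ] ℤ → Module.End ℂ M)
    (hT : TwTrunc YM)
    (k : V → V → ℕ) (hWC : ∀ u v : V, TwWC p YM (k u v) u v) :
    ∀ (u v w : V) (φ : M), ∃ F : ℤ → ℤ → ℤ → ℤ → ℤ → ℤ → M,
      TwIsLaurent6 F ∧
      (∀ n0 n4 n5 N1 N2 N3 : ℤ, n0 < -(k u v : ℤ) → F n0 n4 n5 N1 N2 N3 = 0) ∧
      (∀ n0 n4 n5 N1 N2 N3 : ℤ, n4 < -(k u w : ℤ) → F n0 n4 n5 N1 N2 N3 = 0) ∧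
      (∀ n0 n4 n5 N1 N2 N3 : ℤ, n5 < -(k v w : ℤ) → F n0 n4 n5 N1 N2 N3 = 0) ∧
      (∀ A B C : ℤ,
        YM u (-A - p) (YM v (-B - p) (YM w (-C - p) φ))
          = ∑ᶠ q : (ℤ × ℤ × ℤ) × ℕ × ℕ × ℕ,
              ((-1 : ℂ) ^ (q.2.1 + q.2.2.1 + q.2.2.2) *
                cbinom (q.1.1 : ℂ) q.2.1 * cbinom (q.1.2.1 : ℂ) q.2.2.1 *
                cbinom (q.1.2.2 : ℂ) q.2.2.2) •
              F q.1.1 q.1.2.1 q.1.2.2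
                (A - (p : ℤ) * (q.1.1 - q.2.1) - (p : ℤ) * (q.1.2.1 - q.2.2.1))
                (B - (p : ℤ) * q.2.1 - (p : ℤ) * (q.1.2.2 - q.2.2.2))
                (C - (p : ℤ) * q.2.2.1 - (p : ℤ) * q.2.2.2)) :=
  statement10_general p hp YM hT k hWC

end S10
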